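/- arXiv:0811.3990 — 4 statements merged into one kernel-verified Lean document; each statement's English description precedes it below -/
import Mathlib

section
/- Let A be an infinite generating set for a group G, and for r ≥ 0 let S_A(r) = {x ∈ G : ℓ_A(x) = r} and L_A(r) = |S_A(r)|. If r > 1 and S_A(r) is finite, then S_A(r') is empty for all r' > r. -/
noncomputable def wordLength {G : Type*} [Group G] (A : Set G) (x : G) : ℕ :=
  sInf {n : ℕ | ∃ l : List G, l.length = n ∧ (∀ g ∈ l, g ∈ A ∪ A⁻¹) ∧ l.prod = x}

/-!
Finiteness of spheres propagates outward from radius `1`: splitting off the last letter of a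
geodesic puts each `y ∈ S(n+1)` at distance `≤ 1` from some `z ∈ S(n)`, and if `a` is the
first letter of a geodesic for `z`, then `y ↦ a⁻¹ y` maps those `y` injectively into `S(n)`.
So `S(r)`, `S(r+1)`, `S(r+2)` are all finite; but for `x ∈ S(r+1)` right multiplication by the
infinitely many generators moves `x` injectively into their union. Hence `S(r+1) = ∅`, and
emptiness propagates outward since prefixes of geodesics are geodesics.
-/

namespace wordLength

variable {G : Type*} [Group G] {A : Set G}

def sphere (A : Set G) (n : ℕ) : Set G := {x | wordLength A x = n}

theorem exists_list_length_eq (hA : Subgroup.closure A = ⊤) (x : G) :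
    ∃ l : List G, l.length = wordLength A x ∧ (∀ g ∈ l, g ∈ A ∪ A⁻¹) ∧ l.prod = x := by
  have hx : x ∈ Submonoid.closure (A ∪ A⁻¹) := by
    rw [← Subgroup.closure_toSubmonoid, hA]
    trivial
  obtain ⟨l, hl, hlx⟩ := Submonoid.exists_list_of_mem_closure hx
  exact Nat.sInf_mem
    (s := {n | ∃ l : List G, l.length = n ∧ (∀ g ∈ l, g ∈ A ∪ A⁻¹) ∧ l.prod = x})
    ⟨l.length, l, rfl, hl, hlx⟩

theorem list_prod_le (l : List G) (hl : ∀ g ∈ l, g ∈ A ∪ A⁻¹) :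
    wordLength A l.prod ≤ l.length :=
  Nat.sInf_le ⟨l, rfl, hl, rfl⟩

theorem le_one_of_mem {b : G} (hb : b ∈ A ∪ A⁻¹) : wordLength A b ≤ 1 := by
  simpa using list_prod_le [b] (by simpa using hb)

theorem mul_le (hA : Subgroup.closure A = ⊤) (x y : G) :
    wordLength A (x * y) ≤ wordLength A x + wordLength A y := by
  obtain ⟨l, hl, hlA, rfl⟩ := exists_list_length_eq hA x
  obtain ⟨m, hm, hmA, rfl⟩ := exists_list_length_eq hA y
  rw [← hl, ← hm, ← List.length_append, ← List.prod_append]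
  exact list_prod_le _ fun g hg => (List.mem_append.mp hg).elim (hlA g) (hmA g)

theorem exists_mul_eq (hA : Subgroup.closure A = ⊤) {x : G} {n : ℕ}
    (hx : wordLength A x = n) {k : ℕ} (hk : k ≤ n) :
    ∃ p q : G, wordLength A p = k ∧ wordLength A q = n - k ∧ p * q = x := by
  obtain ⟨l, hl, hlA, hlx⟩ := exists_list_length_eq hA x
  have hp : wordLength A (l.take k).prod ≤ k :=
    (list_prod_le _ fun g hg => hlA g (List.mem_of_mem_take hg)).trans (List.length_take_le _ _)
  have hq : wordLength A (l.drop k).prod ≤ n - k :=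
    (list_prod_le _ fun g hg => hlA g (List.mem_of_mem_drop hg)).trans_eq (by simp [hl, hx])
  have hpq : (l.take k).prod * (l.drop k).prod = x := by
    rw [List.prod_take_mul_prod_drop, hlx]
  have := mul_le hA (l.take k).prod (l.drop k).prod
  rw [hpq, hx] at this
  exact ⟨_, _, by omega, by omega, hpq⟩

theorem sphere_eq_empty_of_le (hA : Subgroup.closure A = ⊤) {m m' : ℕ}
    (hm : sphere A m = ∅) (hmm' : m ≤ m') : sphere A m' = ∅ :=
  Set.eq_empty_of_forall_notMem fun x hx => by
    obtain ⟨p, -, hp, -, -⟩ := exists_mul_eq hA hx hmm'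
    exact (Set.eq_empty_iff_forall_notMem.mp hm) p hp

theorem sphere_succ_subset_biUnion (hA : Subgroup.closure A = ⊤) (n : ℕ) :
    sphere A (n + 1) ⊆
      ⋃ z ∈ sphere A n, sphere A (n + 1) ∩ {y | wordLength A (z⁻¹ * y) ≤ 1} := by
  intro y hy
  obtain ⟨z, c, hz, hc, rfl⟩ := exists_mul_eq hA hy (Nat.le_succ n)
  exact Set.mem_biUnion hz ⟨hy, by simp [hc]⟩

theorem exists_sphere_succ_inter_subset_preimage (hA : Subgroup.closure A = ⊤) {n : ℕ}
    (hn : 1 ≤ n) {z : G} (hz : z ∈ sphere A n) :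
    ∃ a : G, sphere A (n + 1) ∩ {y | wordLength A (z⁻¹ * y) ≤ 1} ⊆
      (a⁻¹ * ·) ⁻¹' sphere A n := by
  obtain ⟨a, p, ha, hp, rfl⟩ := exists_mul_eq hA hz hn
  refine ⟨a, fun y ⟨hy, hzy⟩ => ?_⟩
  have hay : a⁻¹ * y = p * ((a * p)⁻¹ * y) := by group
  have upper := mul_le hA p ((a * p)⁻¹ * y)
  have lower := mul_le hA a (a⁻¹ * y)
  rw [mul_inv_cancel_left] at lower
  rw [← hay] at upper
  change wordLength A y = n + 1 at hy
  change _ ≤ 1 at hzy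
  change wordLength A (a⁻¹ * y) = n
  omega

theorem sphere_succ_finite (hA : Subgroup.closure A = ⊤) {n : ℕ} (hn : 1 ≤ n)
    (hfin : (sphere A n).Finite) : (sphere A (n + 1)).Finite := by
  refine (hfin.biUnion fun z hz => ?_).subset (sphere_succ_subset_biUnion hA n)
  obtain ⟨a, ha⟩ := exists_sphere_succ_inter_subset_preimage hA hn hz
  exact (hfin.preimage (mul_right_injective a⁻¹).injOn).subset ha

theorem finite_of_mem_sphere (hA : Subgroup.closure A = ⊤) {x : G} {n : ℕ}
    (hx : x ∈ sphere A (n + 1)) (h₀ : (sphere A n).Finite) (h₁ : (sphere A (n + 1)).Finite)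
    (h₂ : (sphere A (n + 2)).Finite) : A.Finite := by
  refine ((h₀.union h₁).union h₂ |>.preimage (mul_right_injective x).injOn).subset
    fun b hb => ?_
  have hb₁ := le_one_of_mem (Or.inl hb : b ∈ A ∪ A⁻¹)
  have hb₁' := le_one_of_mem (Or.inr (Set.inv_mem_inv.mpr hb) : b⁻¹ ∈ A ∪ A⁻¹)
  have upper := mul_le hA x b
  have lower := mul_le hA (x * b) b⁻¹
  rw [mul_inv_cancel_right] at lower
  change wordLength A x = n + 1 at hx
  simp only [sphere, Set.mem_preimage, Set.mem_union, Set.mem_ofPred_eq]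
  omega

end wordLength

theorem stmt5 {G : Type*} [Group G] (A : Set G) (hA : Subgroup.closure A = ⊤)
    (hinf : A.Infinite) (r : ℕ) (hr : 1 < r)
    (hfin : {x : G | wordLength A x = r}.Finite) :
    ∀ r' : ℕ, r < r' → {x : G | wordLength A x = r'} = ∅ := by
  intro r' hr'
  have h₁ := wordLength.sphere_succ_finite hA (by omega) hfin
  have h₂ := wordLength.sphere_succ_finite hA (by omega) h₁
  have hempty : wordLength.sphere A (r + 1) = ∅ := Set.eq_empty_of_forall_notMem fun x hx =>
    hinf (wordLength.finite_of_mem_sphere hA hx hfin h₁ h₂)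
  exact wordLength.sphere_eq_empty_of_le hA hempty hr'
end

section
/- Let G₁, G₂ be groups with infinite generating sets A₁, A₂ having phase transitions (r₁, s₁) and (r₂, s₂) respectively. Then the generating set A = (A₁ × {e₂}) ∪ ({e₁} × A₂) of G₁ × G₂ has phase transition (r₁ + r₂, s₁·s₂) with transition set S_{A₁}(r₁) × S_{A₂}(r₂). -/
section WordLength

variable {G : Type*} [Group G] {A : Set G}

theorem wordLength_le_length {l : List G} (hl : ∀ g ∈ l, g ∈ A ∪ A⁻¹) :
    wordLength A l.prod ≤ l.length :=
  Nat.sInf_le ⟨l, rfl, hl, rfl⟩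

theorem exists_word_length_eq_wordLength {l : List G} (hl : ∀ g ∈ l, g ∈ A ∪ A⁻¹) :
    ∃ l' : List G, l'.length = wordLength A l.prod ∧ (∀ g ∈ l', g ∈ A ∪ A⁻¹) ∧
      l'.prod = l.prod :=
  Nat.sInf_mem (s := {n | ∃ l' : List G, l'.length = n ∧ (∀ g ∈ l', g ∈ A ∪ A⁻¹) ∧
    l'.prod = l.prod}) ⟨l.length, l, rfl, hl, rfl⟩

theorem exists_word_length_eq_wordLength_of_closure_eq_top (hA : Subgroup.closure A = ⊤)
    (x : G) :
    ∃ l : List G, l.length = wordLength A x ∧ (∀ g ∈ l, g ∈ A ∪ A⁻¹) ∧ l.prod = x := by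
  have hx : x ∈ Submonoid.closure (A ∪ A⁻¹) := by
    rw [← Subgroup.closure_toSubmonoid, hA]
    trivial
  obtain ⟨l, hl, rfl⟩ := Submonoid.exists_list_of_mem_closure hx
  exact exists_word_length_eq_wordLength hl

theorem wordLength_le_of_forall_gt {r₀ : ℕ}
    (htop : ∀ r > r₀, {x : G | wordLength A x = r} = ∅) (x : G) : wordLength A x ≤ r₀ := by
  by_contra! h
  exact Set.eq_empty_iff_forall_notMem.mp (htop _ h) x rfl

end WordLength

section ProdGenSet

variable {M₁ M₂ : Type*}

def prodGenSet [One M₁] [One M₂] (S₁ : Set M₁) (S₂ : Set M₂) : Set (M₁ × M₂) :=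
  S₁ ×ˢ {1} ∪ {1} ×ˢ S₂

theorem prodGenSet_union_inv [DivisionMonoid M₁] [DivisionMonoid M₂] (S₁ : Set M₁) (S₂ : Set M₂) :
    prodGenSet S₁ S₂ ∪ (prodGenSet S₁ S₂)⁻¹ = prodGenSet (S₁ ∪ S₁⁻¹) (S₂ ∪ S₂⁻¹) := by
  ext
  simp only [prodGenSet, Set.union_inv, Set.inv_prod, Set.inv_singleton, inv_one,
    Set.union_prod, Set.prod_union, Set.mem_union]
  tauto

variable [Monoid M₁] [Monoid M₂] {S₁ : Set M₁} {S₂ : Set M₂}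

theorem exists_split_of_forall_mem_prodGenSet :
    ∀ l : List (M₁ × M₂), (∀ g ∈ l, g ∈ prodGenSet S₁ S₂) →
      ∃ l₁ : List M₁, ∃ l₂ : List M₂, l₁.length + l₂.length = l.length ∧
        (∀ g ∈ l₁, g ∈ S₁) ∧ (∀ g ∈ l₂, g ∈ S₂) ∧ l₁.prod = l.prod.1 ∧ l₂.prod = l.prod.2
  | [], _ => ⟨[], [], rfl, by simp, by simp, rfl, rfl⟩
  | x :: l, hl => by
    obtain ⟨l₁, l₂, hlen, hl₁, hl₂, hp₁, hp₂⟩ :=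
      exists_split_of_forall_mem_prodGenSet l fun g hg => hl g (List.mem_cons_of_mem x hg)
    rcases hl x List.mem_cons_self with ⟨hx₁, hx₂ : x.2 = 1⟩ | ⟨hx₁ : x.1 = 1, hx₂⟩
    · refine ⟨x.1 :: l₁, l₂, by simp [← hlen]; omega, ?_, hl₂, by simp [hp₁], by simp [hp₂, hx₂]⟩
      simpa [hx₁] using hl₁
    · refine ⟨l₁, x.2 :: l₂, by simp [← hlen]; omega, hl₁, ?_, by simp [hp₁, hx₁], by simp [hp₂]⟩
      simpa [hx₂] using hl₂

theorem forall_mem_prodGenSet_of_forall_mem {l₁ : List M₁} {l₂ : List M₂}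
    (hl₁ : ∀ g ∈ l₁, g ∈ S₁) (hl₂ : ∀ g ∈ l₂, g ∈ S₂) :
    ∀ g ∈ l₁.map (MonoidHom.inl M₁ M₂) ++ l₂.map (MonoidHom.inr M₁ M₂), g ∈ prodGenSet S₁ S₂ := by
  simp only [List.mem_append, List.mem_map]
  rintro _ (⟨a, ha, rfl⟩ | ⟨b, hb, rfl⟩)
  · exact Or.inl ⟨hl₁ a ha, rfl⟩
  · exact Or.inr ⟨rfl, hl₂ b hb⟩

theorem prod_map_inl_append_map_inr (l₁ : List M₁) (l₂ : List M₂) :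
    (l₁.map (MonoidHom.inl M₁ M₂) ++ l₂.map (MonoidHom.inr M₁ M₂)).prod = (l₁.prod, l₂.prod) := by
  simp [← map_list_prod]

end ProdGenSet

section Product

variable {G₁ G₂ : Type*} [Group G₁] [Group G₂] {A₁ : Set G₁} {A₂ : Set G₂}

theorem wordLength_fst_add_wordLength_snd_le_length {l : List (G₁ × G₂)}
    (hl : ∀ g ∈ l, g ∈ prodGenSet A₁ A₂ ∪ (prodGenSet A₁ A₂)⁻¹) :
    wordLength A₁ l.prod.1 + wordLength A₂ l.prod.2 ≤ l.length := by
  rw [prodGenSet_union_inv] at hl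
  obtain ⟨l₁, l₂, hlen, hl₁, hl₂, hp₁, hp₂⟩ := exists_split_of_forall_mem_prodGenSet l hl
  rw [← hp₁, ← hp₂, ← hlen]
  exact add_le_add (wordLength_le_length hl₁) (wordLength_le_length hl₂)

theorem wordLength_prodGenSet (hg₁ : Subgroup.closure A₁ = ⊤) (hg₂ : Subgroup.closure A₂ = ⊤)
    (x : G₁ × G₂) :
    wordLength (prodGenSet A₁ A₂) x = wordLength A₁ x.1 + wordLength A₂ x.2 := by
  obtain ⟨l₁, hlen₁, hl₁, hp₁⟩ := exists_word_length_eq_wordLength_of_closure_eq_top hg₁ x.1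
  obtain ⟨l₂, hlen₂, hl₂, hp₂⟩ := exists_word_length_eq_wordLength_of_closure_eq_top hg₂ x.2
  have hl := forall_mem_prodGenSet_of_forall_mem hl₁ hl₂
  rw [← prodGenSet_union_inv] at hl
  have hx : (l₁.map (MonoidHom.inl G₁ G₂) ++ l₂.map (MonoidHom.inr G₁ G₂)).prod = x := by
    rw [prod_map_inl_append_map_inr, hp₁, hp₂]
  apply le_antisymm
  · simpa [hx, hlen₁, hlen₂] using wordLength_le_length hl
  · obtain ⟨l, hlen, hl, hp⟩ := exists_word_length_eq_wordLength hl
    rw [hx] at hp hlen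
    rw [← hlen, ← hp]
    exact wordLength_fst_add_wordLength_snd_le_length hl

end Product

theorem setOf_add_eq_add_eq_prod {α β : Type*} {f₁ : α → ℕ} {f₂ : β → ℕ} {r₁ r₂ : ℕ}
    (h₁ : ∀ a, f₁ a ≤ r₁) (h₂ : ∀ b, f₂ b ≤ r₂) :
    {x : α × β | f₁ x.1 + f₂ x.2 = r₁ + r₂} = {a | f₁ a = r₁} ×ˢ {b | f₂ b = r₂} := by
  ext x
  have := h₁ x.1
  have := h₂ x.2
  simp only [Set.mem_ofPred_eq, Set.mem_prod]
  omega

universe u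
theorem stmt10_general {G₁ G₂ : Type u} [Group G₁] [Group G₂] (A₁ : Set G₁) (A₂ : Set G₂)
    (hg₁ : Subgroup.closure A₁ = ⊤) (hg₂ : Subgroup.closure A₂ = ⊤)
    (r₁ r₂ : ℕ) (s₁ s₂ : Cardinal)
    (hne₁ : {x : G₁ | wordLength A₁ x = r₁}.Nonempty)
    (htop₁ : ∀ r > r₁, {x : G₁ | wordLength A₁ x = r} = ∅)
    (hs₁ : Cardinal.mk {x : G₁ | wordLength A₁ x = r₁} = s₁)
    (hne₂ : {x : G₂ | wordLength A₂ x = r₂}.Nonempty)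
    (htop₂ : ∀ r > r₂, {x : G₂ | wordLength A₂ x = r} = ∅)
    (hs₂ : Cardinal.mk {x : G₂ | wordLength A₂ x = r₂} = s₂)
    (A : Set (G₁ × G₂))
    (hA : A = (A₁ ×ˢ ({1} : Set G₂)) ∪ (({1} : Set G₁) ×ˢ A₂)) :
    {x : G₁ × G₂ | wordLength A x = r₁ + r₂} =
      {x₁ : G₁ | wordLength A₁ x₁ = r₁} ×ˢ {x₂ : G₂ | wordLength A₂ x₂ = r₂} ∧
    {x : G₁ × G₂ | wordLength A x = r₁ + r₂}.Nonempty ∧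
    (∀ r > r₁ + r₂, {x : G₁ × G₂ | wordLength A x = r} = ∅) ∧
    Cardinal.mk {x : G₁ × G₂ | wordLength A x = r₁ + r₂} = s₁ * s₂ := by
  have hwl : ∀ x, wordLength A x = wordLength A₁ x.1 + wordLength A₂ x.2 :=
    hA ▸ wordLength_prodGenSet hg₁ hg₂
  have hb₁ := wordLength_le_of_forall_gt htop₁
  have hb₂ := wordLength_le_of_forall_gt htop₂
  have hset : {x : G₁ × G₂ | wordLength A x = r₁ + r₂} =
      {x₁ : G₁ | wordLength A₁ x₁ = r₁} ×ˢ {x₂ : G₂ | wordLength A₂ x₂ = r₂} := by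
    simp_rw [hwl]
    exact setOf_add_eq_add_eq_prod hb₁ hb₂
  refine ⟨hset, hset ▸ hne₁.prod hne₂, fun r hr => ?_, ?_⟩
  · refine Set.eq_empty_of_forall_notMem fun x hx => ?_
    have : wordLength A x = r := hx
    linarith [hwl x, hb₁ x.1, hb₂ x.2]
  · rw [hset, ← hs₁, ← hs₂, Cardinal.mk_congr (Equiv.Set.prod _ _), Cardinal.mk_prod,
      Cardinal.lift_id, Cardinal.lift_id]

theorem stmt10 {G₁ G₂ : Type u} [Group G₁] [Group G₂] (A₁ : Set G₁) (A₂ : Set G₂)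
    (hg₁ : Subgroup.closure A₁ = ⊤) (hg₂ : Subgroup.closure A₂ = ⊤)
    (hi₁ : A₁.Infinite) (hi₂ : A₂.Infinite)
    (r₁ r₂ : ℕ) (s₁ s₂ : Cardinal)
    (hne₁ : {x : G₁ | wordLength A₁ x = r₁}.Nonempty)
    (htop₁ : ∀ r > r₁, {x : G₁ | wordLength A₁ x = r} = ∅)
    (hs₁ : Cardinal.mk {x : G₁ | wordLength A₁ x = r₁} = s₁)
    (hne₂ : {x : G₂ | wordLength A₂ x = r₂}.Nonempty)
    (htop₂ : ∀ r > r₂, {x : G₂ | wordLength A₂ x = r} = ∅)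
    (hs₂ : Cardinal.mk {x : G₂ | wordLength A₂ x = r₂} = s₂)
    (A : Set (G₁ × G₂))
    (hA : A = (A₁ ×ˢ ({1} : Set G₂)) ∪ (({1} : Set G₁) ×ˢ A₂)) :
    {x : G₁ × G₂ | wordLength A x = r₁ + r₂} =
      {x₁ : G₁ | wordLength A₁ x₁ = r₁} ×ˢ {x₂ : G₂ | wordLength A₂ x₂ = r₂} ∧
    {x : G₁ × G₂ | wordLength A x = r₁ + r₂}.Nonempty ∧
    (∀ r > r₁ + r₂, {x : G₁ × G₂ | wordLength A x = r} = ∅) ∧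
    Cardinal.mk {x : G₁ × G₂ | wordLength A x = r₁ + r₂} = s₁ * s₂ :=
  stmt10_general A₁ A₂ hg₁ hg₂ r₁ r₂ s₁ s₂ hne₁ htop₁ hs₁ hne₂ htop₂ hs₂ A hA
end

section
/- Let m be a positive integer and A = {1} ∪ {m, 2m, 3m, ...} ⊆ ℤ, a generating set of the additive group ℤ. Then L_A(r) = ∞ for 1 ≤ r ≤ ⌊m/2⌋ + 1 and L_A(r) = 0 for r > ⌊m/2⌋ + 1. -/
/-!
Every letter of `A ∪ -A` is `±1` or a multiple of `m`. So a word either uses only `±1`, and then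
its length is at least `|x|`, or it contains a multiple of `m`, and then its `±1` letters sum to
some `t ≡ x [ZMOD m]` with `|t|` smaller than its length. Writing `x = q m + s` with `|s| ≤ m / 2`,
this gives `ℓ_A(x) ≥ min(|x|, |s| + 1)`, while the word `q m, ±1, …, ±1` has length `|s| + 1`.
Hence all lengths are at most `m / 2 + 1`, and `(k + 1) m + (r - 1)` has length exactly `r`.
-/

noncomputable def addWordLength {G : Type*} [AddGroup G] (A : Set G) (x : G) : ℕ :=
  sInf {n : ℕ | ∃ l : List G, l.length = n ∧ (∀ g ∈ l, g ∈ A ∪ (-A)) ∧ l.sum = x}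

section WordLength

variable {G : Type*} [AddGroup G] {A : Set G}

theorem addWordLength_sum_le_length {l : List G} (hl : ∀ g ∈ l, g ∈ A ∪ -A) :
    addWordLength A l.sum ≤ l.length :=
  Nat.sInf_le ⟨l, rfl, hl, rfl⟩

theorem exists_word_length_eq_addWordLength {x : G}
    (hx : ∃ l : List G, (∀ g ∈ l, g ∈ A ∪ -A) ∧ l.sum = x) :
    ∃ l : List G, (∀ g ∈ l, g ∈ A ∪ -A) ∧ l.sum = x ∧ l.length = addWordLength A x := by
  obtain ⟨l, hlen, hl, hsum⟩ :=
    Nat.sInf_mem (s := {n : ℕ | ∃ l : List G, l.length = n ∧ (∀ g ∈ l, g ∈ A ∪ -A) ∧ l.sum = x})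
      (by obtain ⟨l, hl, hsum⟩ := hx; exact ⟨l.length, l, rfl, hl, hsum⟩)
  exact ⟨l, hl, hsum, hlen⟩

end WordLength

namespace Int

theorem abs_le_abs_of_modEq {m s t : ℤ} (h : t ≡ s [ZMOD m]) (hs : 2 * |s| ≤ m) : |s| ≤ |t| := by
  by_contra! hlt
  have hsub : |s - t| < m := by linarith [abs_sub s t]
  exact hlt.ne' (congrArg abs (sub_eq_zero.mp (eq_zero_of_abs_lt_dvd h.dvd hsub)))

theorem sum_replicate_natAbs_sign (x : ℤ) : (List.replicate x.natAbs x.sign).sum = x := by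
  rw [List.sum_replicate, nsmul_eq_mul, mul_comm, sign_mul_natAbs]

theorem abs_sum_le_length_or_exists_modEq_abs_lt_length (m : ℤ) {l : List ℤ}
    (hl : ∀ g ∈ l, |g| ≤ 1 ∨ m ∣ g) :
    |l.sum| ≤ l.length ∨ ∃ t : ℤ, l.sum ≡ t [ZMOD m] ∧ |t| < l.length := by
  induction l with
  | nil => simp
  | cons g l ih =>
    simp only [List.sum_cons, List.length_cons, Nat.cast_succ]
    obtain ⟨hg | hg, hsmall | ⟨t, ht, htl⟩⟩ :=
      And.intro (hl g List.mem_cons_self) (ih fun a ha => hl a (List.mem_cons_of_mem g ha))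
    · exact Or.inl (by linarith [abs_add_le g l.sum])
    · exact Or.inr ⟨g + t, ht.add_left g, by linarith [abs_add_le g t]⟩
    · exact Or.inr ⟨l.sum, add_modEq_right_iff.mpr hg, by linarith⟩
    · exact Or.inr ⟨t, (add_modEq_right_iff.mpr hg).trans ht, by linarith⟩

end Int

def oneAndPosMultiples (m : ℕ) : Set ℤ := {1} ∪ {n : ℤ | ∃ k : ℕ, 1 ≤ k ∧ n = (k : ℤ) * m}

namespace oneAndPosMultiples

variable {m : ℕ}

theorem one_mem : (1 : ℤ) ∈ oneAndPosMultiples m := Or.inl rfl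

theorem sign_mem_symm {x : ℤ} (hx : x ≠ 0) :
    x.sign ∈ oneAndPosMultiples m ∪ -oneAndPosMultiples m := by
  rcases hx.lt_or_gt with hx | hx
  · right
    simpa [Int.sign_eq_neg_one_of_neg hx] using one_mem
  · exact Or.inl (by simpa [Int.sign_eq_one_of_pos hx] using one_mem)

theorem mul_mem_symm {q : ℤ} (hq : q ≠ 0) :
    q * m ∈ oneAndPosMultiples m ∪ -oneAndPosMultiples m := by
  rcases hq.lt_or_gt with hq | hq
  · exact Or.inr (Or.inr ⟨q.natAbs, by omega, by rw [Int.natCast_natAbs, abs_of_neg hq]; ring⟩)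
  · exact Or.inl (Or.inr ⟨q.natAbs, by omega, by rw [Int.natCast_natAbs, abs_of_pos hq]⟩)

theorem abs_le_one_or_dvd_of_mem_symm {g : ℤ}
    (hg : g ∈ oneAndPosMultiples m ∪ -oneAndPosMultiples m) : |g| ≤ 1 ∨ (m : ℤ) ∣ g := by
  rcases hg with (rfl | ⟨k, -, rfl⟩) | (hg | ⟨k, -, hg⟩)
  · simp
  · exact Or.inr (dvd_mul_left _ _)
  · exact Or.inl (by rw [← abs_neg, Set.mem_singleton_iff.mp hg, abs_one])
  · exact Or.inr ⟨-k, by linear_combination -hg⟩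

theorem forall_mem_replicate_natAbs_sign (x : ℤ) :
    ∀ g ∈ List.replicate x.natAbs x.sign, g ∈ oneAndPosMultiples m ∪ -oneAndPosMultiples m := by
  intro g hg
  obtain ⟨hx, rfl⟩ := List.mem_replicate.mp hg
  exact sign_mem_symm (Int.natAbs_ne_zero.mp hx)

theorem addWordLength_le_natAbs (x : ℤ) : addWordLength (oneAndPosMultiples m) x ≤ x.natAbs := by
  have := addWordLength_sum_le_length (forall_mem_replicate_natAbs_sign (m := m) x)
  rwa [Int.sum_replicate_natAbs_sign, List.length_replicate] at this

theorem addWordLength_mul_add_le {q : ℤ} (hq : q ≠ 0) (s : ℤ) :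
    addWordLength (oneAndPosMultiples m) (q * m + s) ≤ s.natAbs + 1 := by
  have hword : ∀ g ∈ q * m :: List.replicate s.natAbs s.sign,
      g ∈ oneAndPosMultiples m ∪ -oneAndPosMultiples m :=
    List.forall_mem_cons.mpr ⟨mul_mem_symm hq, forall_mem_replicate_natAbs_sign s⟩
  have := addWordLength_sum_le_length hword
  rwa [List.sum_cons, Int.sum_replicate_natAbs_sign, List.length_cons, List.length_replicate] at this

theorem natAbs_lt_addWordLength_of_modEq {x s : ℤ} (hxs : x ≡ s [ZMOD m]) (hs : 2 * |s| ≤ m)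
    (hsx : |s| < |x|) : s.natAbs < addWordLength (oneAndPosMultiples m) x := by
  obtain ⟨l, hl, rfl, hlen⟩ := exists_word_length_eq_addWordLength
    ⟨_, forall_mem_replicate_natAbs_sign (m := m) x, Int.sum_replicate_natAbs_sign x⟩
  rw [← hlen, ← Int.ofNat_lt, Int.natCast_natAbs]
  obtain hsum | ⟨t, ht, htl⟩ := Int.abs_sum_le_length_or_exists_modEq_abs_lt_length (m : ℤ)
    fun g hg => abs_le_one_or_dvd_of_mem_symm (hl g hg)
  · exact hsx.trans_le hsum
  · exact (Int.abs_le_abs_of_modEq (ht.symm.trans hxs) hs).trans_lt htl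

theorem addWordLength_le (hm : 0 < m) (x : ℤ) :
    addWordLength (oneAndPosMultiples m) x ≤ m / 2 + 1 := by
  have hs : (x.bmod m).natAbs ≤ m / 2 := by
    have := Int.le_bmod (x := x) hm
    have := Int.bmod_lt (x := x) hm
    omega
  rw [← Int.bdiv_add_bmod' x m]
  by_cases hq : x.bdiv m = 0
  · simpa [hq] using (addWordLength_le_natAbs (x.bmod m)).trans (hs.trans (Nat.le_succ _))
  · exact (addWordLength_mul_add_le hq _).trans (Nat.succ_le_succ hs)

theorem addWordLength_succ_mul_add (hm : 1 ≤ m) (k : ℕ) {r : ℕ} (hr : 1 ≤ r)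
    (hrm : r ≤ m / 2 + 1) :
    addWordLength (oneAndPosMultiples m) (((k : ℤ) + 1) * m + (r - 1)) = r := by
  apply le_antisymm
  · simpa [show ((r : ℤ) - 1).natAbs + 1 = r by omega] using
      addWordLength_mul_add_le (by omega : (k : ℤ) + 1 ≠ 0) (r - 1 : ℤ)
  · have hs : 0 ≤ (r : ℤ) - 1 := by omega
    have hmul : (m : ℤ) ≤ ((k : ℤ) + 1) * m := le_mul_of_one_le_left (by positivity) (by omega)
    have hlt := natAbs_lt_addWordLength_of_modEq (m := m) (s := (r : ℤ) - 1)
      (x := ((k : ℤ) + 1) * m + (r - 1))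
      (Int.add_modEq_right_iff.mpr (dvd_mul_left _ _)) (by rw [abs_of_nonneg hs]; omega)
      (by rw [abs_of_nonneg hs, abs_of_nonneg (by omega)]; omega)
    omega

end oneAndPosMultiples

theorem stmt15 (m : ℕ) (hm : 1 ≤ m)
    (A : Set ℤ) (hA : A = {1} ∪ {n : ℤ | ∃ k : ℕ, 1 ≤ k ∧ n = (k : ℤ) * m}) :
    AddSubgroup.closure A = ⊤ ∧
    (∀ r : ℕ, 1 ≤ r → r ≤ m / 2 + 1 → {x : ℤ | addWordLength A x = r}.Infinite) ∧
    (∀ r : ℕ, m / 2 + 1 < r → {x : ℤ | addWordLength A x = r} = ∅) := by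
  change A = oneAndPosMultiples m at hA
  subst hA
  refine ⟨?_, fun r hr hrm => ?_, fun r hr => ?_⟩
  · rw [eq_top_iff, ← Int.zmultiples_one, AddSubgroup.zmultiples_le]
    exact AddSubgroup.subset_closure oneAndPosMultiples.one_mem
  · have hinj : Function.Injective fun k : ℕ => ((k : ℤ) + 1) * m + (r - 1) := fun a b hab => by
      have := mul_right_cancel₀ (by omega : (m : ℤ) ≠ 0) (add_right_cancel hab)
      omega
    exact Set.infinite_of_injective_forall_mem hinj
      fun k => oneAndPosMultiples.addWordLength_succ_mul_add hm k hr hrm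
  · exact Set.eq_empty_of_forall_notMem fun x hx =>
      (oneAndPosMultiples.addWordLength_le hm x).not_gt (hx ▸ hr)
end

section
/- Let r ≥ 1 and let A ⊆ ℤʳ be the set of lattice points with at most one nonzero coordinate (and that coordinate arbitrary in ℤ). Then A generates ℤʳ, ℓ_A(x) equals the number of nonzero coordinates of x, and the phase transition of A is (r, ∞) with transition set {x ∈ ℤʳ : all coordinates of x are nonzero}. -/
theorem addWordLength_eq {G : Type*} [AddGroup G] {A : Set G} {x : G} {n : ℕ}
    (hword : ∃ l : List G, l.length = n ∧ (∀ g ∈ l, g ∈ A ∪ (-A)) ∧ l.sum = x)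
    (hmin : ∀ l : List G, (∀ g ∈ l, g ∈ A ∪ (-A)) → l.sum = x → n ≤ l.length) :
    addWordLength A x = n :=
  IsLeast.csInf_eq ⟨hword, by rintro _ ⟨l, rfl, hl, hsum⟩; exact hmin l hl hsum⟩

def axisSet (ι M : Type*) [Zero M] : Set (ι → M) :=
  {x | ∃ i, ∀ j, j ≠ i → x j = 0}

theorem single_mem_axisSet {ι M : Type*} [DecidableEq ι] [Zero M] (i : ι) (c : M) :
    Pi.single i c ∈ axisSet ι M :=
  ⟨i, fun _ hj => Pi.single_eq_of_ne hj _⟩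

section Axis

variable {ι M : Type*} [AddCommGroup M]

theorem axisSet_union_neg : axisSet ι M ∪ -axisSet ι M = axisSet ι M := by
  refine Set.union_eq_left.2 fun x ⟨i, hi⟩ => ⟨i, fun j hj => ?_⟩
  simpa using hi j hj

theorem closure_axisSet [Fintype ι] [DecidableEq ι] : AddSubgroup.closure (axisSet ι M) = ⊤ :=
  eq_top_iff.2 fun x _ => Finset.univ_sum_single x ▸
    AddSubgroup.sum_mem _ fun i _ => AddSubgroup.subset_closure (single_mem_axisSet i (x i))

variable [Fintype ι] [DecidableEq M]

theorem card_ne_zero_add_le {x : ι → M} (hx : x ∈ axisSet ι M) (y : ι → M) :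
    (Finset.univ.filter fun i => (x + y) i ≠ 0).card ≤
      (Finset.univ.filter fun i => y i ≠ 0).card + 1 := by
  obtain ⟨i, hi⟩ := hx
  classical
  calc _ ≤ (insert i (Finset.univ.filter fun j => y j ≠ 0)).card := by
        refine Finset.card_le_card fun j hj => ?_
        by_cases hji : j = i
        · simp [hji]
        · exact Finset.mem_insert_of_mem (by simpa [hi j hji] using hj)
    _ ≤ _ := Finset.card_insert_le _ _

theorem card_ne_zero_sum_le_length {l : List (ι → M)} (hl : ∀ g ∈ l, g ∈ axisSet ι M) :
    (Finset.univ.filter fun i => l.sum i ≠ 0).card ≤ l.length := by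
  induction l with
  | nil => simp
  | cons g l ih =>
    rw [List.forall_mem_cons] at hl
    rw [List.sum_cons, List.length_cons]
    exact (card_ne_zero_add_le hl.1 l.sum).trans (Nat.add_le_add_right (ih hl.2) 1)

variable [DecidableEq ι]

theorem sum_single_ne_zero (x : ι → M) :
    ∑ i ∈ Finset.univ.filter (fun i => x i ≠ 0), Pi.single i (x i) = x := by
  rw [Finset.sum_filter_of_ne (p := fun i => x i ≠ 0) fun i _ h hi => h (by simp [hi]),
    Finset.univ_sum_single]

theorem addWordLength_axisSet (x : ι → M) :
    addWordLength (axisSet ι M) x = (Finset.univ.filter fun i => x i ≠ 0).card := by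
  refine addWordLength_eq ⟨(Finset.univ.filter fun i => x i ≠ 0).toList.map
      fun i => Pi.single i (x i), by simp, ?_, by simp [sum_single_ne_zero]⟩ ?_
  · simp only [List.mem_map, axisSet_union_neg]
    rintro _ ⟨i, -, rfl⟩
    exact single_mem_axisSet i (x i)
  · intro l hl hsum
    rw [axisSet_union_neg] at hl
    exact hsum ▸ card_ne_zero_sum_le_length hl

end Axis

theorem card_ne_zero_eq_card_iff {ι M : Type*} [Fintype ι] [Zero M] [DecidableEq M]
    (x : ι → M) :
    (Finset.univ.filter fun i => x i ≠ 0).card = Fintype.card ι ↔ ∀ i, x i ≠ 0 := by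
  simp [← Finset.card_univ, Finset.card_filter_eq_iff]

theorem infinite_setOf_forall_ne_zero {ι M : Type*} [Nonempty ι] [Zero M] [Infinite M] :
    {x : ι → M | ∀ i, x i ≠ 0}.Infinite :=
  ((Set.finite_singleton (0 : M)).infinite_compl.image Function.const_injective.injOn).mono
    (by rintro _ ⟨c, hc, rfl⟩ _; exact hc)

theorem stmt16 (r : ℕ) (hr : 1 ≤ r)
    (A : Set (Fin r → ℤ))
    (hA : A = {x : Fin r → ℤ | ∃ i : Fin r, ∀ j : Fin r, j ≠ i → x j = 0}) :
    AddSubgroup.closure A = ⊤ ∧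
    (∀ x : Fin r → ℤ,
      addWordLength A x = (Finset.univ.filter fun i : Fin r => x i ≠ 0).card) ∧
    (∀ r' : ℕ, r < r' → {x : Fin r → ℤ | addWordLength A x = r'} = ∅) ∧
    {x : Fin r → ℤ | addWordLength A x = r} = {x : Fin r → ℤ | ∀ i, x i ≠ 0} ∧
    {x : Fin r → ℤ | addWordLength A x = r}.Infinite := by
  change A = axisSet (Fin r) ℤ at hA
  subst hA
  have htop : {x : Fin r → ℤ | addWordLength (axisSet (Fin r) ℤ) x = r} =
      {x | ∀ i, x i ≠ 0} := by
    ext x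
    simpa [addWordLength_axisSet] using card_ne_zero_eq_card_iff x
  have : Nonempty (Fin r) := ⟨⟨0, hr⟩⟩
  refine ⟨closure_axisSet, addWordLength_axisSet, fun r' hr' => ?_, htop,
    htop ▸ infinite_setOf_forall_ne_zero⟩
  refine Set.eq_empty_of_forall_notMem fun x (hx : _ = r') => hr'.not_ge ?_
  simpa [← hx, addWordLength_axisSet] using Finset.card_filter_le Finset.univ fun i => x i ≠ 0
end
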